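/- arXiv:1412.7488 — 5 statements merged into one kernel-verified Lean document; each statement's English description precedes it below -/
import Mathlib

section
/- On the linear extensions of any finite poset P, the operator T_{i,j} is inverse to T_{j,i}: for every linear extension π, (π · T_{i,j}) · T_{j,i} = π. -/
open scoped Classical
noncomputable section

/-- `π` is a linear extension of the strict order `lt` on `Fin n`. -/
def IsLinExt {n : ℕ} (lt : Fin n → Fin n → Prop) (π : Equiv.Perm (Fin n)) : Prop :=
  ∀ i j : Fin n, lt (π i) (π j) → i < j

/-- The operator `τ_i` (0-based): swap positions `i`, `i+1` if entries are incomparable. -/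
def tauOp {n : ℕ} (lt : Fin n → Fin n → Prop) (i : ℕ) (π : Equiv.Perm (Fin n)) :
    Equiv.Perm (Fin n) :=
  if h : i + 1 < n then
    if ¬ lt (π ⟨i, Nat.lt_of_succ_lt h⟩) (π ⟨i + 1, h⟩) ∧
       ¬ lt (π ⟨i + 1, h⟩) (π ⟨i, Nat.lt_of_succ_lt h⟩)
    then π * Equiv.swap ⟨i, Nat.lt_of_succ_lt h⟩ ⟨i + 1, h⟩
    else π
  else π

/-- The operator `T_{i,j}` (0-based): `τ_i τ_{i+1} ⋯ τ_{j-1}` for `i ≤ j`,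
and `τ_{i-1} ⋯ τ_j` for `i > j`, applied left to right. -/
def Tmove {n : ℕ} (lt : Fin n → Fin n → Prop) (i j : ℕ) (π : Equiv.Perm (Fin n)) :
    Equiv.Perm (Fin n) :=
  if i ≤ j then (List.range (j - i)).foldl (fun p k => tauOp lt (i + k) p) π
  else (List.range (i - j)).foldl (fun p k => tauOp lt (i - 1 - k) p) π

/-- The transition matrix of the `P`-random-to-random shuffle. -/
def Mrr {n : ℕ} (lt : Fin n → Fin n → Prop) (π π' : Equiv.Perm (Fin n)) : ℝ :=
  (Finset.univ.filter (fun p : Fin n × Fin n => π' = Tmove lt (p.1 : ℕ) (p.2 : ℕ) π)).card /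
    (n ^ 2 : ℝ)

/-- Each `τ_m` is an involution on all permutations. -/
lemma tau_invol {n : ℕ} (lt : Fin n → Fin n → Prop) (m : ℕ) (π : Equiv.Perm (Fin n)) :
    tauOp lt m (tauOp lt m π) = π := by
  unfold tauOp
  by_cases h : m + 1 < n
  · simp only [dif_pos h]
    set a : Fin n := ⟨m, Nat.lt_of_succ_lt h⟩
    set b : Fin n := ⟨m + 1, h⟩
    by_cases c : ¬ lt (π a) (π b) ∧ ¬ lt (π b) (π a)
    · rw [if_pos c]
      have ha : (π * Equiv.swap a b) a = π b := by simp [Equiv.Perm.mul_apply]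
      have hb : (π * Equiv.swap a b) b = π a := by simp [Equiv.Perm.mul_apply]
      rw [if_pos (by rw [ha, hb]; exact ⟨c.2, c.1⟩)]
      rw [mul_assoc, Equiv.swap_mul_self, mul_one]
    · rw [if_neg c, if_neg c]
  · simp only [dif_neg h]

/-- The reversed product of `τ`'s undoes the forward one. -/
lemma foldl_inv {n : ℕ} (lt : Fin n → Fin n → Prop) (i : ℕ) :
    ∀ (d : ℕ) (π : Equiv.Perm (Fin n)),
    (List.range d).foldl (fun p k => tauOp lt (i + d - 1 - k) p)
      ((List.range d).foldl (fun p k => tauOp lt (i + k) p) π) = π := by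
  intro d
  induction d with
  | zero => intro π; simp
  | succ d ih =>
    intro π
    have hF : (List.range (d + 1)).foldl (fun p k => tauOp lt (i + k) p) π
        = tauOp lt (i + d) ((List.range d).foldl (fun p k => tauOp lt (i + k) p) π) := by
      rw [List.range_succ, List.foldl_append]; simp
    have hG : ∀ x : Equiv.Perm (Fin n),
        (List.range (d + 1)).foldl (fun p k => tauOp lt (i + (d + 1) - 1 - k) p) x
        = (List.range d).foldl (fun p k => tauOp lt (i + d - 1 - k) p)
            (tauOp lt (i + d) x) := by
      intro x
      rw [List.range_succ_eq_map, List.foldl_cons, List.foldl_map]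
      have h0 : i + (d + 1) - 1 - 0 = i + d := by omega
      rw [h0]
      simp only [show ∀ k, i + (d + 1) - 1 - Nat.succ k = i + d - 1 - k from fun k => by omega]
    rw [hF, hG, tau_invol, ih]

/-- The forward product of `τ`'s undoes the reversed one. -/
lemma foldl_inv' {n : ℕ} (lt : Fin n → Fin n → Prop) (i : ℕ) :
    ∀ (d : ℕ) (π : Equiv.Perm (Fin n)),
    (List.range d).foldl (fun p k => tauOp lt (i + k) p)
      ((List.range d).foldl (fun p k => tauOp lt (i + d - 1 - k) p) π) = π := by
  intro d
  induction d with
  | zero => intro π; simp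
  | succ d ih =>
    intro π
    have hG : (List.range (d + 1)).foldl (fun p k => tauOp lt (i + (d + 1) - 1 - k) p) π
        = (List.range d).foldl (fun p k => tauOp lt (i + d - 1 - k) p)
            (tauOp lt (i + d) π) := by
      rw [List.range_succ_eq_map, List.foldl_cons, List.foldl_map]
      have h0 : i + (d + 1) - 1 - 0 = i + d := by omega
      rw [h0]
      simp only [show ∀ k, i + (d + 1) - 1 - Nat.succ k = i + d - 1 - k from fun k => by omega]
    have hF : ∀ x : Equiv.Perm (Fin n),
        (List.range (d + 1)).foldl (fun p k => tauOp lt (i + k) p) x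
        = tauOp lt (i + d) ((List.range d).foldl (fun p k => tauOp lt (i + k) p) x) := by
      intro x
      rw [List.range_succ, List.foldl_append]; simp
    rw [hG, hF, ih, tau_invol]

/-- on linear extensions, `T_{i,j}` is inverse to `T_{j,i}`. -/
theorem T_inverse {n : ℕ} (P : PartialOrder (Fin n)) (π : Equiv.Perm (Fin n))
    (hπ : IsLinExt P.lt π) (i j : ℕ) (hi : i < n) (hj : j < n) :
    Tmove P.lt j i (Tmove P.lt i j π) = π := by
  unfold Tmove
  rcases lt_trichotomy i j with h | h | h
  · rw [if_pos h.le, if_neg (not_le.mpr h)]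
    have h1 : ∀ k, j - 1 - k = i + (j - i) - 1 - k := by intro k; omega
    have := foldl_inv P.lt i (j - i) π
    simpa only [← h1] using this
  · subst h; simp
  · rw [if_neg (not_le.mpr h), if_pos h.le]
    have h1 : ∀ k, i - 1 - k = j + (i - j) - 1 - k := by intro k; omega
    have := foldl_inv' P.lt j (i - j) π
    simpa only [← h1] using this
end
end

section
/- The sort map commutes with the operators τ_i: for P a finite poset, Q a direct sum of chains obtained by linearly ordering each connected component of P, and sort : L(P) → L(Q) the map that sorts the elements within each connected component according to the chosen chain order, one has sort(π · τ_i) = sort(π) · τ_i for every linear extension π of P and every 1 ≤ i ≤ n-1. -/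
open scoped Classical
noncomputable section

/-- Two elements are in the same connected component of the comparability graph. -/
def InSameComp {n : ℕ} (lt : Fin n → Fin n → Prop) (x y : Fin n) : Prop :=
  Relation.ReflTransGen (fun a b => lt a b ∨ lt b a) x y

/-!
If the entries at positions `i` and `i + 1` of `π` lie in one component of `P`, then neither
`τ_i` on `π` nor the `Q`-operator on `sort π` changes which component occupies each position.
Otherwise they are incomparable in `P`, and the entries of `sort π` there are incomparable in
`Q` because `Q` only relates elements of one component, so both operators swap. Either way
`sort (π · τ_i)` and `sort π · τ_i` are linear extensions of `Q` with the same component at each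
position, and such a linear extension is unique because `Q` is a chain on each component.
-/

open Equiv

namespace InSameComp

variable {n : ℕ} {lt : Fin n → Fin n → Prop} {x y z : Fin n}

theorem of_lt (h : lt x y) : InSameComp lt x y :=
  .single (.inl h)

theorem symm (h : InSameComp lt x y) : InSameComp lt y x :=
  (@Relation.ReflTransGen.stdSymm _ _ ⟨fun _ _ hab => hab.symm⟩).symm _ _ h

theorem trans (h : InSameComp lt x y) (h' : InSameComp lt y z) : InSameComp lt x z :=
  Relation.ReflTransGen.trans h h'

end InSameComp

section tauOp

variable {n : ℕ}

theorem tauOp_of_incomparable {i : ℕ} (lt : Fin n → Fin n → Prop) (hi : i + 1 < n)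
    {π : Perm (Fin n)} (h₁ : ¬ lt (π ⟨i, by omega⟩) (π ⟨i + 1, hi⟩))
    (h₂ : ¬ lt (π ⟨i + 1, hi⟩) (π ⟨i, by omega⟩)) :
    tauOp lt i π = π * swap ⟨i, by omega⟩ ⟨i + 1, hi⟩ := by
  simp [tauOp, hi, h₁, h₂]

theorem tauOp_eq_self_or_mul_swap {i : ℕ} (lt : Fin n → Fin n → Prop) (hi : i + 1 < n)
    (π : Perm (Fin n)) :
    tauOp lt i π = π ∨ tauOp lt i π = π * swap ⟨i, by omega⟩ ⟨i + 1, hi⟩ := by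
  unfold tauOp
  split_ifs <;> simp

theorem lt_or_eq_of_swap_lt_swap {i : ℕ} (hi : i + 1 < n) {a b : Fin n}
    (h : swap ⟨i, by omega⟩ ⟨i + 1, hi⟩ a < swap ⟨i, by omega⟩ ⟨i + 1, hi⟩ b) :
    a < b ∨ (a = ⟨i + 1, hi⟩ ∧ b = ⟨i, by omega⟩) := by
  simp only [swap_apply_def] at h
  simp only [Fin.lt_def, Fin.ext_iff]
  split_ifs at h <;> simp only [Fin.ext_iff, Fin.lt_def] at * <;> omega

theorem IsLinExt.tauOp {lt : Fin n → Fin n → Prop} {π : Perm (Fin n)} (hπ : IsLinExt lt π)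
    (i : ℕ) : IsLinExt lt (tauOp lt i π) := by
  by_cases hi : i + 1 < n
  swap
  · simpa [_root_.tauOp, hi] using hπ
  by_cases hinc :
      ¬ lt (π ⟨i, by omega⟩) (π ⟨i + 1, hi⟩) ∧ ¬ lt (π ⟨i + 1, hi⟩) (π ⟨i, by omega⟩)
  · rw [tauOp_of_incomparable lt hi hinc.1 hinc.2]
    intro a b hab
    rcases lt_or_eq_of_swap_lt_swap hi (hπ _ _ hab) with hlt | ⟨ha, hb⟩
    · exact hlt
    · simp only [ha, hb, Perm.mul_apply, swap_apply_left, swap_apply_right] at hab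
      exact absurd hab hinc.1
  · simpa [_root_.tauOp, hi, hinc] using hπ

theorem inSameComp_tauOp_apply {i : ℕ} {lt : Fin n → Fin n → Prop}
    (ρ : Fin n → Fin n → Prop) (hi : i + 1 < n) {σ : Perm (Fin n)}
    (hσ : InSameComp lt (σ ⟨i, by omega⟩) (σ ⟨i + 1, hi⟩)) (k : Fin n) :
    InSameComp lt (tauOp ρ i σ k) (σ k) := by
  rcases tauOp_eq_self_or_mul_swap ρ hi σ with h | h <;> rw [h]
  · exact .refl
  · rw [Perm.mul_apply, swap_apply_def]
    split_ifs with hk₁ hk₂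
    · exact hk₁ ▸ hσ.symm
    · exact hk₂ ▸ hσ
    · exact .refl

theorem inSameComp_tauOp_tauOp {i : ℕ} {lt ρ : Fin n → Fin n → Prop} (hi : i + 1 < n)
    (hρ : ∀ x y, ρ x y → InSameComp lt x y) {π σ : Perm (Fin n)}
    (hπσ : ∀ k, InSameComp lt (π k) (σ k)) (k : Fin n) :
    InSameComp lt (tauOp lt i π k) (tauOp ρ i σ k) := by
  by_cases hsame : InSameComp lt (π ⟨i, by omega⟩) (π ⟨i + 1, hi⟩)
  · have hσ := (hπσ _).symm.trans (hsame.trans (hπσ _))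
    exact (inSameComp_tauOp_apply lt hi hsame k).trans
      ((hπσ k).trans (inSameComp_tauOp_apply ρ hi hσ k).symm)
  · have hσ : ¬ InSameComp lt (σ ⟨i, by omega⟩) (σ ⟨i + 1, hi⟩) := fun h =>
      hsame ((hπσ _).trans (h.trans (hπσ _).symm))
    rw [tauOp_of_incomparable lt hi (fun h => hsame (InSameComp.of_lt h))
      (fun h => hsame (InSameComp.of_lt h).symm),
      tauOp_of_incomparable ρ hi (fun h => hσ (hρ _ _ h)) (fun h => hσ (hρ _ _ h).symm)]
    exact hπσ _

end tauOp

namespace IsLinExt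

variable {n : ℕ} {lt : Fin n → Fin n → Prop} {σ τ : Perm (Fin n)}

theorem not_lt_of_eqOn_lt (hτ : IsLinExt lt τ) {k : Fin n} (hagree : ∀ l < k, σ l = τ l) :
    ¬ lt (σ k) (τ k) := by
  intro h
  have hl : τ (τ.symm (σ k)) = σ k := τ.apply_symm_apply _
  have hlk : τ.symm (σ k) < k := hτ _ _ (by rwa [hl])
  exact hlk.ne (σ.injective ((hagree _ hlk).trans hl))

theorem eq_of_forall_rel {r : Fin n → Fin n → Prop}
    (htotal : ∀ x y, r x y → x ≠ y → lt x y ∨ lt y x)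
    (hσ : IsLinExt lt σ) (hτ : IsLinExt lt τ) (hr : ∀ k, r (σ k) (τ k)) : σ = τ := by
  ext1 k
  induction k using WellFoundedLT.induction with
  | _ k ih =>
    by_contra hne
    rcases htotal _ _ (hr k) hne with h | h
    · exact hτ.not_lt_of_eqOn_lt ih h
    · exact hσ.not_lt_of_eqOn_lt (fun l hl => (ih l hl).symm) h

end IsLinExt

theorem sort_commutes_tau_general {n : ℕ} (P Q : PartialOrder (Fin n))
    (hQchain : ∀ x y, InSameComp P.lt x y → x ≠ y → (Q.lt x y ∨ Q.lt y x))
    (hQsep : ∀ x y, Q.lt x y → InSameComp P.lt x y)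
    (sort : Equiv.Perm (Fin n) → Equiv.Perm (Fin n))
    (hsort : ∀ π, IsLinExt P.lt π →
        IsLinExt Q.lt (sort π) ∧ ∀ k : Fin n, InSameComp P.lt (π k) (sort π k)) :
    ∀ π : Equiv.Perm (Fin n), IsLinExt P.lt π → ∀ i : ℕ, i + 1 < n →
      sort (tauOp P.lt i π) = tauOp Q.lt i (sort π) := by
  intro π hπ i hi
  obtain ⟨hσ, hπσ⟩ := hsort π hπ
  obtain ⟨hσ', hπσ'⟩ := hsort _ (hπ.tauOp i)
  refine hσ'.eq_of_forall_rel hQchain (hσ.tauOp i) fun k => ?_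
  exact (hπσ' k).symm.trans (inSameComp_tauOp_tauOp hi hQsep hπσ k)

/-- the sort map from `L(P)` to `L(Q)` — where `Q` is a direct sum of chains
obtained by linearly ordering each connected component of `P`, and `sort π` is the unique
linear extension of `Q` occupying the positions of each component by the same entries as
`π`, rearranged in increasing `Q`-order — commutes with the operators `τ_i`. -/
theorem sort_commutes_tau {n : ℕ} (P Q : PartialOrder (Fin n))
    (hQext : ∀ x y, P.lt x y → Q.lt x y)
    (hQchain : ∀ x y, InSameComp P.lt x y → x ≠ y → (Q.lt x y ∨ Q.lt y x))
    (hQsep : ∀ x y, Q.lt x y → InSameComp P.lt x y)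
    (sort : Equiv.Perm (Fin n) → Equiv.Perm (Fin n))
    (hsort : ∀ π, IsLinExt P.lt π →
        IsLinExt Q.lt (sort π) ∧ ∀ k : Fin n, InSameComp P.lt (π k) (sort π k)) :
    ∀ π : Equiv.Perm (Fin n), IsLinExt P.lt π → ∀ i : ℕ, i + 1 < n →
      sort (tauOp P.lt i π) = tauOp Q.lt i (sort π) :=
  sort_commutes_tau_general P Q hQchain hQsep sort hsort
end
end

section
/- The diameter of the P-random-to-random shuffle Markov chain on the linear extensions of a poset P of size n is at most n: any linear extension π' can be reached from any linear extension π by applying at most n operators T_{i,j}. -/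
open scoped Classical
noncomputable section

lemma swap_linExt {n : ℕ} {lt : Fin n → Fin n → Prop} {σ : Equiv.Perm (Fin n)}
    (hσ : IsLinExt lt σ) (a b : Fin n) (hab : (a : ℕ) + 1 = (b : ℕ))
    (h1 : ¬ lt (σ a) (σ b)) (h2 : ¬ lt (σ b) (σ a)) :
    IsLinExt lt (σ * Equiv.swap a b) := by
  intro i j h
  simp only [Equiv.Perm.mul_apply] at h
  have key : Equiv.swap a b i < Equiv.swap a b j := by
    by_cases hia : i = a <;> by_cases hib : i = b <;> by_cases hja : j = a <;>
      by_cases hjb : j = b <;> subst_vars <;>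
      simp_all [Equiv.swap_apply_left, Equiv.swap_apply_right, Equiv.swap_apply_of_ne_of_ne]
    all_goals first | exact hσ _ _ h | exact absurd (hσ _ _ h) (lt_irrefl _)
  rw [Fin.lt_def] at key ⊢
  have h1' : (Equiv.swap a b i : ℕ) = if i = a then b else if i = b then a else i := by
    by_cases hia : i = a <;> by_cases hib : i = b <;>
      simp_all [Equiv.swap_apply_left, Equiv.swap_apply_right, Equiv.swap_apply_of_ne_of_ne]
  have h2' : (Equiv.swap a b j : ℕ) = if j = a then b else if j = b then a else j := by
    by_cases hja : j = a <;> by_cases hjb : j = b <;>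
      simp_all [Equiv.swap_apply_left, Equiv.swap_apply_right, Equiv.swap_apply_of_ne_of_ne]
  have via2 : ∀ x y : Fin n, x ≠ y → (x:ℕ) ≠ (y:ℕ) := fun x y hxy => fun hv => hxy (Fin.ext hv)
  by_cases hia : i = a <;> by_cases hib : i = b <;> by_cases hja : j = a <;>
    by_cases hjb : j = b <;> subst_vars <;> simp_all <;> omega

lemma tau_swap {n : ℕ} (lt : Fin n → Fin n → Prop) (σ : Equiv.Perm (Fin n)) (i : ℕ)
    (h : i + 1 < n)
    (h1 : ¬ lt (σ ⟨i, Nat.lt_of_succ_lt h⟩) (σ ⟨i + 1, h⟩))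
    (h2 : ¬ lt (σ ⟨i + 1, h⟩) (σ ⟨i, Nat.lt_of_succ_lt h⟩)) :
    tauOp lt i σ = σ * Equiv.swap ⟨i, Nat.lt_of_succ_lt h⟩ ⟨i + 1, h⟩ := by
  rw [tauOp, dif_pos h, if_pos ⟨h1, h2⟩]

lemma move_spec {n : ℕ} (lt : Fin n → Fin n → Prop) (p : ℕ) :
    ∀ (d : ℕ) (σ : Equiv.Perm (Fin n)), IsLinExt lt σ → ∀ (hpd : p + d < n),
      (∀ t (ht : t < n), p < t → t ≤ p + d →
        ¬ lt (σ ⟨p, by omega⟩) (σ ⟨t, ht⟩)) →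
      IsLinExt lt ((List.range d).foldl (fun q k => tauOp lt (p + k) q) σ) ∧
      ((List.range d).foldl (fun q k => tauOp lt (p + k) q) σ) ⟨p + d, hpd⟩
        = σ ⟨p, by omega⟩ ∧
      ∀ j : Fin n, (j.val < p ∨ p + d < j.val) →
        ((List.range d).foldl (fun q k => tauOp lt (p + k) q) σ) j = σ j := by
  intro d
  induction d with
  | zero => intro σ hσ hpd _; exact ⟨hσ, rfl, fun j _ => rfl⟩
  | succ d ih =>
    intro σ hσ hpd hcomp
    have hpd' : p + d < n := by omega
    obtain ⟨ih1, ih2, ih3⟩ := ih σ hσ hpd' (fun t ht h1 h2 => hcomp t ht h1 (by omega))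
    set σd := (List.range d).foldl (fun q k => tauOp lt (p + k) q) σ with hσd
    have hfold : (List.range (d+1)).foldl (fun q k => tauOp lt (p + k) q) σ
        = tauOp lt (p + d) σd := by
      rw [List.range_succ, List.foldl_append, List.foldl_cons, List.foldl_nil]
    have hn : p + d + 1 < n := by omega
    have e1 : σd ⟨p + d, Nat.lt_of_succ_lt hn⟩ = σ ⟨p, by omega⟩ := ih2
    have e2 : σd ⟨p + d + 1, hn⟩ = σ ⟨p + d + 1, hn⟩ := ih3 _ (by simp)
    have h1 : ¬ lt (σd ⟨p + d, Nat.lt_of_succ_lt hn⟩) (σd ⟨p + d + 1, hn⟩) := by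
      rw [e1, e2]; exact hcomp (p + d + 1) hn (by omega) (by omega)
    have h2 : ¬ lt (σd ⟨p + d + 1, hn⟩) (σd ⟨p + d, Nat.lt_of_succ_lt hn⟩) := by
      rw [e1, e2]; intro hl
      have := hσ _ _ hl
      rw [Fin.lt_def] at this; simp at this; omega
    have htau : tauOp lt (p + d) σd
        = σd * Equiv.swap ⟨p + d, Nat.lt_of_succ_lt hn⟩ ⟨p + d + 1, hn⟩ := tau_swap lt σd (p + d) hn h1 h2
    rw [hfold, htau]
    refine ⟨swap_linExt ih1 _ _ rfl h1 h2, ?_, ?_⟩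
    · show σd ((Equiv.swap ⟨p + d, Nat.lt_of_succ_lt hn⟩ ⟨p + d + 1, hn⟩) ⟨p + d + 1, hn⟩) = _
      rw [Equiv.swap_apply_right]; exact e1
    · intro j hj
      have hja : j ≠ ⟨p + d, Nat.lt_of_succ_lt hn⟩ := by
        intro h; subst h; simp at hj <;> omega
      have hjb : j ≠ ⟨p + d + 1, hn⟩ := by
        intro h; subst h; simp at hj <;> omega
      rw [Equiv.Perm.mul_apply, Equiv.swap_apply_of_ne_of_ne hja hjb]
      exact ih3 j (by rcases hj with h | h; exacts [Or.inl h, Or.inr (by omega)])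

lemma claim {n : ℕ} (lt : Fin n → Fin n → Prop) (π' : Equiv.Perm (Fin n))
    (hπ' : IsLinExt lt π') :
    ∀ k (σ : Equiv.Perm (Fin n)), IsLinExt lt σ →
      (∀ j : Fin n, k ≤ j.val → σ j = π' j) →
      ∃ l : List (Fin n × Fin n), l.length ≤ k ∧
        l.foldl (fun σ p => Tmove lt (p.1 : ℕ) (p.2 : ℕ) σ) σ = π' := by
  intro k
  induction k with
  | zero =>
    intro σ _ hag
    exact ⟨[], le_refl _, Equiv.ext fun j => hag j (Nat.zero_le _)⟩
  | succ k ih =>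
    intro σ hσ hag
    by_cases hk : k < n
    · set x := π' ⟨k, hk⟩ with hx
      set i := σ.symm x with hi
      have hσi : σ i = x := σ.apply_symm_apply x
      have hik : i.val ≤ k := by
        by_contra h
        have : σ i = π' i := hag i (by omega)
        have : i = ⟨k, hk⟩ := π'.injective (by rw [← this, hσi])
        rw [this] at h; simp at h
      have hpd : i.val + (k - i.val) < n := by omega
      have hcomp : ∀ t (ht : t < n), i.val < t → t ≤ i.val + (k - i.val) →
          ¬ lt (σ ⟨i.val, by omega⟩) (σ ⟨t, ht⟩) := by
        intro t ht h1 h2 hl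
        have hsi : (⟨i.val, by omega⟩ : Fin n) = i := Fin.ext rfl
        rw [hsi, hσi] at hl
        set m := π'.symm (σ ⟨t, ht⟩) with hm
        have hπm : π' m = σ ⟨t, ht⟩ := π'.apply_symm_apply _
        have hkm : (⟨k, hk⟩ : Fin n) < m := hπ' _ _ (by rw [hπm]; exact hl)
        have hkm' : k < m.val := hkm
        have hσm : σ m = π' m := hag m (by omega)
        have hmt : m = ⟨t, ht⟩ := σ.injective (by rw [hσm, hπm])
        have : m.val = t := by rw [hmt]
        omega
      obtain ⟨m1, m2, m3⟩ := move_spec lt i.val (k - i.val) σ hσ hpd hcomp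
      set σ' := (List.range (k - i.val)).foldl (fun q j => tauOp lt (i.val + j) q) σ
        with hσ'
      have hT : Tmove lt (i : ℕ) (k : ℕ) σ = σ' := by
        rw [Tmove, if_pos hik]
      have hfix : (⟨i.val + (k - i.val), hpd⟩ : Fin n) = ⟨k, hk⟩ := Fin.ext (by simp; omega)
      have hσ'k : σ' ⟨k, hk⟩ = x := by
        rw [← hfix, m2, Fin.eta]; exact hσi
      have hag' : ∀ j : Fin n, k ≤ j.val → σ' j = π' j := by
        intro j hj
        rcases eq_or_lt_of_le hj with h | h
        · have : j = ⟨k, hk⟩ := Fin.ext h.symm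
          rw [this, hσ'k, hx]
        · rw [m3 j (Or.inr (by omega))]; exact hag j (by omega)
      obtain ⟨l, hl1, hl2⟩ := ih σ' m1 hag'
      refine ⟨(i, ⟨k, hk⟩) :: l, by simpa using Nat.succ_le_succ hl1, ?_⟩
      rw [List.foldl_cons]
      simpa [hT] using hl2
    · obtain ⟨l, hl1, hl2⟩ := ih σ hσ (fun j hj => absurd j.isLt (by omega))
      exact ⟨l, le_trans hl1 (Nat.le_succ _), hl2⟩


/-- the diameter of the `P`-random-to-random chain is at most `n`: any
linear extension is reachable from any other by applying at most `n` operators `T_{i,j}`. -/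
theorem diameter_le {n : ℕ} (P : PartialOrder (Fin n)) (π π' : Equiv.Perm (Fin n))
    (hπ : IsLinExt P.lt π) (hπ' : IsLinExt P.lt π') :
    ∃ l : List (Fin n × Fin n), l.length ≤ n ∧
      l.foldl (fun σ p => Tmove P.lt (p.1 : ℕ) (p.2 : ℕ) σ) π = π' :=
  claim P.lt π' hπ' n π hπ (fun j hj => absurd j.isLt (by omega))
end
end

section
/- Let P be a poset of size n labeled so that π' is a linear extension, and suppose a linear extension π starts with 1,2,...,i-1 and has value i at position j ≥ i. Then all values at positions i,...,j-1 of π are incomparable to i in P, and applying T_{j,i} to π moves i to position i, yielding a linear extension starting with 1,2,...,i. -/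
open scoped Classical
noncomputable section

/-- 0-based indices: if the identity is a linear extension of `P`,
`π ∈ L(P)` starts with `0,1,…,i-1` and has value `i` at position `j ≥ i`, then all
entries at positions `i,…,j-1` are incomparable to `i`, and `T_{j,i}` moves `i` to
position `i`, yielding a linear extension starting with `0,1,…,i`. -/
theorem sorting_step {n : ℕ} (P : PartialOrder (Fin n)) (hid : IsLinExt P.lt 1)
    (π : Equiv.Perm (Fin n)) (hπ : IsLinExt P.lt π) (i j : ℕ) (hij : i ≤ j) (hj : j < n)
    (hstart : ∀ k (hk : k < i),
      π ⟨k, lt_of_lt_of_le hk (le_of_lt (lt_of_le_of_lt hij hj))⟩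
        = ⟨k, lt_of_lt_of_le hk (le_of_lt (lt_of_le_of_lt hij hj))⟩)
    (hval : π ⟨j, hj⟩ = ⟨i, lt_of_le_of_lt hij hj⟩) :
    (∀ k (hk1 : i ≤ k) (hk2 : k < j),
        ¬ P.lt (π ⟨k, lt_trans hk2 hj⟩) ⟨i, lt_of_le_of_lt hij hj⟩ ∧
        ¬ P.lt (⟨i, lt_of_le_of_lt hij hj⟩ : Fin n) (π ⟨k, lt_trans hk2 hj⟩)) ∧
    IsLinExt P.lt (Tmove P.lt j i π) ∧
    (∀ k (hk : k ≤ i),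
        Tmove P.lt j i π ⟨k, lt_of_le_of_lt hk (lt_of_le_of_lt hij hj)⟩
          = ⟨k, lt_of_le_of_lt hk (lt_of_le_of_lt hij hj)⟩) := by
  have hin : i < n := lt_of_le_of_lt hij hj
  -- values < i sit at positions < i
  have hpos : ∀ p : Fin n, ((π p : Fin n) : ℕ) < i → (p : ℕ) < i := by
    intro p hp
    have h1 := hstart ((π p : Fin n) : ℕ) hp
    have h2 : π ⟨((π p : Fin n) : ℕ), lt_of_lt_of_le hp (le_of_lt hin)⟩ = π p := by
      rw [h1]
    have h3 := π.injective h2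
    have := congrArg Fin.val h3
    simpa using this.symm ▸ hp
  have part1 : ∀ k (hk1 : i ≤ k) (hk2 : k < j),
      ¬ P.lt (π ⟨k, lt_trans hk2 hj⟩) ⟨i, hin⟩ ∧
      ¬ P.lt (⟨i, hin⟩ : Fin n) (π ⟨k, lt_trans hk2 hj⟩) := by
    intro k hk1 hk2
    constructor
    · intro h
      have hlt : (π ⟨k, lt_trans hk2 hj⟩ : Fin n) < ⟨i, hin⟩ :=
        hid _ _ (by simpa using h)
      have := hpos ⟨k, lt_trans hk2 hj⟩ (by simpa [Fin.lt_def] using hlt)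
      simp at this; omega
    · intro h
      have := hπ ⟨j, hj⟩ ⟨k, lt_trans hk2 hj⟩ (by rw [hval]; exact h)
      rw [Fin.lt_def] at this; simp at this; omega
  refine ⟨part1, ?_⟩
  -- key induction on the foldl
  have key : ∀ m, m ≤ j - i →
      ∀ σ : Equiv.Perm (Fin n),
        σ = (List.range m).foldl (fun p k => tauOp P.lt (j - 1 - k) p) π →
        (∀ a (h : a < n), a < j - m → σ ⟨a, h⟩ = π ⟨a, h⟩) ∧
        (σ ⟨j - m, by omega⟩ = ⟨i, hin⟩) ∧
        (∀ a (h : a < n), j - m < a → a ≤ j → σ ⟨a, h⟩ = π ⟨a - 1, by omega⟩) ∧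
        (∀ a (h : a < n), j < a → σ ⟨a, h⟩ = π ⟨a, h⟩) := by
    intro m
    induction m with
    | zero =>
      intro _ σ hσ
      subst hσ
      refine ⟨fun a h _ => rfl, hval, fun a h h1 h2 => absurd h2 (by omega),
        fun a h _ => rfl⟩
    | succ m ih =>
      intro hm σ hσ
      obtain ⟨hA, hB, hC, hD⟩ := ih (by omega) _ rfl
      set σm := (List.range m).foldl (fun p k => tauOp P.lt (j - 1 - k) p) π with hσm
      have hσ' : σ = tauOp P.lt (j - 1 - m) σm := by
        rw [hσ, List.range_succ, List.foldl_append, List.foldl_cons, List.foldl_nil]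
      have hp1 : (j - 1 - m) + 1 < n := by omega
      have hpeq : (⟨(j - 1 - m) + 1, hp1⟩ : Fin n) = ⟨j - m, by omega⟩ := by
        apply Fin.ext; simp; omega
      have hvp : σm ⟨j - 1 - m, by omega⟩ = π ⟨j - 1 - m, by omega⟩ :=
        hA _ _ (by omega)
      have hvp1 : σm ⟨(j - 1 - m) + 1, hp1⟩ = ⟨i, hin⟩ := by rw [hpeq]; exact hB
      have hinc := part1 (j - 1 - m) (by omega) (by omega)
      have hcond : ¬ P.lt (σm ⟨j - 1 - m, Nat.lt_of_succ_lt hp1⟩)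
            (σm ⟨(j - 1 - m) + 1, hp1⟩) ∧
          ¬ P.lt (σm ⟨(j - 1 - m) + 1, hp1⟩)
            (σm ⟨j - 1 - m, Nat.lt_of_succ_lt hp1⟩) := by
        rw [hvp1]
        have : σm ⟨j - 1 - m, Nat.lt_of_succ_lt hp1⟩ = π ⟨j - 1 - m, by omega⟩ := hvp
        rw [this]
        exact hinc
      have hσ'' : σ = σm * Equiv.swap (⟨j - 1 - m, Nat.lt_of_succ_lt hp1⟩ : Fin n)
          ⟨(j - 1 - m) + 1, hp1⟩ := by
        rw [hσ', tauOp, dif_pos hp1, if_pos hcond]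
      have swap_eval : ∀ a (h : a < n), σ ⟨a, h⟩ =
          σm (Equiv.swap (⟨j - 1 - m, Nat.lt_of_succ_lt hp1⟩ : Fin n)
            ⟨(j - 1 - m) + 1, hp1⟩ ⟨a, h⟩) := by
        intro a h; rw [hσ'']; rfl
      refine ⟨?_, ?_, ?_, ?_⟩
      · intro a h ha
        rw [swap_eval, Equiv.swap_apply_of_ne_of_ne (by simp; omega) (by simp; omega)]
        exact hA a h (by omega)
      · have e : (⟨j - (m + 1), by omega⟩ : Fin n) = ⟨j - 1 - m, Nat.lt_of_succ_lt hp1⟩ := by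
          apply Fin.ext; simp; omega
        rw [e, swap_eval, Equiv.swap_apply_left, hvp1]
      · intro a h h1 h2
        by_cases hcase : a = (j - 1 - m) + 1
        · subst hcase
          rw [swap_eval]
          have : (⟨(j - 1 - m) + 1, h⟩ : Fin n) = ⟨(j - 1 - m) + 1, hp1⟩ := rfl
          rw [this, Equiv.swap_apply_right, hvp]
          congr 1
        · rw [swap_eval, Equiv.swap_apply_of_ne_of_ne (by simp; omega) (by simp; omega)]
          exact hC a h (by omega) h2
      · intro a h ha
        rw [swap_eval, Equiv.swap_apply_of_ne_of_ne (by simp; omega) (by simp; omega)]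
        exact hD a h ha
  have hT : Tmove P.lt j i π =
      (List.range (j - i)).foldl (fun p k => tauOp P.lt (j - 1 - k) p) π := by
    rw [Tmove]
    by_cases hji : j ≤ i
    · have hji' : i = j := le_antisymm hij hji
      rw [if_pos hji]
      simp [hji']
    · rw [if_neg hji]
  obtain ⟨hA, hB, hC, hD⟩ := key (j - i) le_rfl _ rfl
  rw [hT]
  set σ := (List.range (j - i)).foldl (fun p k => tauOp P.lt (j - 1 - k) p) π with hs
  have hji : j - (j - i) = i := by omega
  -- description of σ
  have hσ : ∀ x : Fin n, ∃ y : Fin n, σ x = π y ∧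
      ((x : ℕ) < i → (y : ℕ) = (x : ℕ)) ∧ ((x : ℕ) = i → (y : ℕ) = j) ∧
      (i < (x : ℕ) → (x : ℕ) ≤ j → (y : ℕ) = (x : ℕ) - 1) ∧
      (j < (x : ℕ) → (y : ℕ) = (x : ℕ)) := by
    intro x
    rcases lt_trichotomy (x : ℕ) i with hx | hx | hx
    · refine ⟨x, ?_, fun _ => rfl, fun h => absurd h (by omega),
        fun h _ => absurd h (by omega), fun h => absurd h (by omega)⟩
      have := hA (x : ℕ) x.isLt (by omega)
      simpa using this
    · refine ⟨⟨j, hj⟩, ?_, fun h => absurd h (by omega), fun _ => rfl,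
        fun h _ => absurd h (by omega), fun h => absurd h (by omega)⟩
      have e : x = (⟨j - (j - i), by omega⟩ : Fin n) := by apply Fin.ext; simp; omega
      rw [e, hB, hval]
    · rcases le_or_gt (x : ℕ) j with hx2 | hx2
      · refine ⟨⟨(x : ℕ) - 1, by omega⟩, ?_, fun h => absurd h (by omega),
          fun h => absurd h (by omega), fun _ _ => rfl, fun h => absurd h (by omega)⟩
        have := hC (x : ℕ) x.isLt (by omega) hx2
        simpa using this
      · refine ⟨x, ?_, fun h => absurd h (by omega), fun h => absurd h (by omega),
          fun _ h => absurd h (by omega), fun _ => rfl⟩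
        have := hD (x : ℕ) x.isLt hx2
        simpa using this
  constructor
  · -- linear extension
    intro a b hlt
    obtain ⟨ya, hya, ha1, ha2, ha3, ha4⟩ := hσ a
    obtain ⟨yb, hyb, hb1, hb2, hb3, hb4⟩ := hσ b
    rw [hya, hyb] at hlt
    have h1 : (ya : ℕ) < (yb : ℕ) := by
      have := hπ _ _ hlt; rwa [Fin.lt_def] at this
    by_cases hbi : (b : ℕ) = i
    · have hybj : yb = (⟨j, hj⟩ : Fin n) := Fin.ext (hb2 hbi)
      rw [hybj, hval] at hlt
      have h2 : (π ya : Fin n) < (⟨i, hin⟩ : Fin n) := hid _ _ (by simpa using hlt)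
      have h3 := hpos ya (by simpa [Fin.lt_def] using h2)
      rw [Fin.lt_def]
      omega
    · rw [Fin.lt_def]
      omega
  · -- starts with 0..i
    intro k hk
    rcases lt_or_eq_of_le hk with hk' | hk'
    · have h1 := hA k (by omega) (by omega)
      have h2 := hstart k hk'
      rw [h1]; exact h2
    · have e : (⟨k, lt_of_le_of_lt hk (lt_of_le_of_lt hij hj)⟩ : Fin n)
          = (⟨j - (j - i), by omega⟩ : Fin n) := Fin.ext (by show k = j - (j - i); omega)
      rw [e, hB]
      exact Fin.ext (by show i = j - (j - i); omega)
end
end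

section
/- The usual braid relations hold for the operators τ_i on linear extensions (i.e., (π · τ_i · τ_{i+1})·τ_i = (π · τ_{i+1} · τ_i)·τ_{i+1} for all linear extensions π and all i) if and only if the poset P is a direct sum of chains. -/
/-!
Write `x, y, z` for the entries of a linear extension in positions `i, i + 1, i + 2`. Evaluating
both sides shows that the braid relation at `i` fails exactly when `x` and `z` are comparable and
exactly one of the pairs `(x, y)`, `(y, z)` is. If every component is a chain, comparability of
distinct elements is transitive, so this never happens. Otherwise some element is comparable to
two incomparable ones, forming a fork `q < p, q < r` or a dual fork `p < q, r < q`. For a fork with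
`q` as high as possible, the elements below `p` or `r` other than `q` form a down-set, so some
linear extension lists them first and then `q, p, r`: a window where the braid relation fails.
A dual fork is a fork of the opposite order, and reversing that linear extension handles it.
-/

open scoped Classical
noncomputable section

open Finset Function Relation

theorem Equiv.swap_braid {α : Type*} [DecidableEq α] {a b c : α}
    (hab : a ≠ b) (hac : a ≠ c) (hbc : b ≠ c) :
    swap a b * swap b c * swap a b = swap b c * swap a b * swap b c := by
  rw [swap_mul_swap_mul_swap hab hac, swap_comm a b, swap_comm b c,
    swap_mul_swap_mul_swap hbc.symm hac.symm, swap_comm]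

section Braid

variable {n : ℕ} (lt : Fin n → Fin n → Prop)

theorem tauOp_eq_ite (σ : Equiv.Perm (Fin n)) {j : ℕ} (hj : j + 1 < n) :
    tauOp lt j σ = if IncompRel lt (σ ⟨j, by omega⟩) (σ ⟨j + 1, hj⟩)
      then σ * Equiv.swap ⟨j, by omega⟩ ⟨j + 1, hj⟩ else σ := by
  rw [tauOp, dif_pos hj]
  rfl

theorem tauOp_braid_iff (π : Equiv.Perm (Fin n)) {i : ℕ} (h : i + 2 < n) :
    tauOp lt i (tauOp lt (i + 1) (tauOp lt i π)) =
        tauOp lt (i + 1) (tauOp lt i (tauOp lt (i + 1) π)) ↔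
      IncompRel lt (π ⟨i, by omega⟩) (π ⟨i + 2, h⟩) ∨
        (IncompRel lt (π ⟨i, by omega⟩) (π ⟨i + 1, by omega⟩) ↔
          IncompRel lt (π ⟨i + 1, by omega⟩) (π ⟨i + 2, h⟩)) := by
  set a : Fin n := ⟨i, by omega⟩
  set b : Fin n := ⟨i + 1, by omega⟩
  set c : Fin n := ⟨i + 2, h⟩
  have hab : a ≠ b := by simp [a, b, Fin.ext_iff]
  have hbc : b ≠ c := by simp [b, c, Fin.ext_iff]
  have hac : a ≠ c := by simp [a, c, Fin.ext_iff]
  have tau_i (σ : Equiv.Perm (Fin n)) : tauOp lt i σ =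
      if IncompRel lt (σ a) (σ b) then σ * Equiv.swap a b else σ := tauOp_eq_ite lt σ _
  have tau_succ (σ : Equiv.Perm (Fin n)) : tauOp lt (i + 1) σ =
      if IncompRel lt (σ b) (σ c) then σ * Equiv.swap b c else σ := tauOp_eq_ite lt σ h
  simp only [tau_i, tau_succ]
  by_cases hA : IncompRel lt (π a) (π b) <;> by_cases hB : IncompRel lt (π b) (π c) <;>
    by_cases hC : IncompRel lt (π a) (π c) <;>
    simp [hA, hB, hC, Equiv.swap_apply_of_ne_of_ne, hab, hbc, hac, hbc.symm, hac.symm,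
      incompRel_comm (a := π c), incompRel_comm (a := π b), mul_assoc,
      Equiv.swap_braid hab hac hbc]

end Braid

section Fork

variable {α : Type*} (lt : α → α → Prop)

def IsFork (q p r : α) : Prop :=
  lt q p ∧ lt q r ∧ IncompRel lt p r ∧ p ≠ r

def numBelow [Fintype α] (a : α) : ℕ := #{w | lt w a}

variable {lt}

theorem IsFork.symm {q p r : α} (h : IsFork lt q p r) : IsFork lt q r p :=
  ⟨h.2.1, h.1, h.2.2.1.symm, h.2.2.2.symm⟩

theorem isFork_or_isFork_swap_of_incompRel [IsStrictOrder α lt] {a b c : α}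
    (hab : SymmGen lt a b) (hbc : SymmGen lt b c) (hac : IncompRel lt a c) (hne : a ≠ c) :
    IsFork lt b a c ∨ IsFork (swap lt) b a c := by
  rcases hab with hab | hba <;> rcases hbc with hbc | hcb
  · exact absurd (_root_.trans hab hbc) hac.1
  · exact Or.inr ⟨hab, hcb, (incompRel_swap_apply lt).2 hac, hne⟩
  · exact Or.inl ⟨hba, hbc, hac, hne⟩
  · exact absurd (_root_.trans hcb hba) hac.2

variable [Fintype α] [IsStrictOrder α lt]

theorem numBelow_lt_numBelow {a b : α} (hab : lt a b) : numBelow lt a < numBelow lt b := by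
  refine card_lt_card ⟨fun w hw => ?_, fun hsub => ?_⟩
  · simp only [mem_filter, mem_univ, true_and] at hw ⊢
    exact _root_.trans hw hab
  · exact irrefl a (by simpa using hsub (by simpa using hab))

/-- If `q < z < p`, replacing `q` by `z` (when also `z < r`) or `p` by `z` (otherwise) gives a
fork of smaller weight. -/
theorem IsFork.not_lt_of_forall_le {q p r z : α} (h : IsFork lt q p r)
    (hmin : ∀ q' p' r', IsFork lt q' p' r' →
      numBelow lt p + numBelow lt r + numBelow (swap lt) q ≤
        numBelow lt p' + numBelow lt r' + numBelow (swap lt) q')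
    (hqz : lt q z) : ¬ lt z p := by
  intro hzp
  obtain ⟨hqp, hqr, hpr, hne⟩ := h
  by_cases hzr : lt z r
  · have := hmin z p r ⟨hzp, hzr, hpr, hne⟩
    have := numBelow_lt_numBelow (lt := swap lt) hqz
    omega
  · have hrz : ¬ lt r z := fun hrz => hpr.2 (_root_.trans hrz hzp)
    have := hmin q z r ⟨hqz, hqr, ⟨hzr, hrz⟩, fun e => hpr.2 (e ▸ hzp)⟩
    have := numBelow_lt_numBelow hzp
    omega

theorem IsFork.exists_forall_not_lt {q p r : α} (h : IsFork lt q p r) :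
    ∃ q p r, IsFork lt q p r ∧ ∀ z, lt q z → ¬ lt z p ∧ ¬ lt z r := by
  obtain ⟨⟨q, p, r⟩, hfork, hmin⟩ := (measure fun t : α × α × α =>
      numBelow lt t.2.1 + numBelow lt t.2.2 + numBelow (swap lt) t.1).wf.has_min
    {t | IsFork lt t.1 t.2.1 t.2.2} ⟨(q, p, r), h⟩
  change IsFork lt q p r at hfork
  have hle (q' p' r' : α) (h' : IsFork lt q' p' r') :
      numBelow lt p + numBelow lt r + numBelow (swap lt) q ≤
        numBelow lt p' + numBelow lt r' + numBelow (swap lt) q' :=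
    not_lt.1 (hmin (q', p', r') h')
  refine ⟨q, p, r, hfork, fun z hqz => ⟨hfork.not_lt_of_forall_le hle hqz,
    hfork.symm.not_lt_of_forall_le (fun q' p' r' h' => ?_) hqz⟩⟩
  have := hle q' p' r' h'
  omega

end Fork

section ForkLevel

variable {α : Type*} (lt : α → α → Prop)

/-- Sorting a linear extension by this level puts first the elements below `p` or `r` other than
`q`, then `q, p, r`, then the rest. -/
def forkLevel (q p r z : α) : ℕ :=
  if z = q then 1 else if z = p then 2 else if z = r then 3 else if lt z p ∨ lt z r then 0 else 4

variable {lt} {q p r : α}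

theorem forkLevel_le_of_lt [IsStrictOrder α lt] (h : IsFork lt q p r)
    (hmax : ∀ z, lt q z → ¬ lt z p ∧ ¬ lt z r) {a b : α} (hab : lt a b) :
    forkLevel lt q p r a ≤ forkLevel lt q p r b := by
  obtain ⟨hqp, hqr, hpr, hne⟩ := h
  have htrans := fun {x y z : α} (hxy : lt x y) (hyz : lt y z) => _root_.trans hxy hyz
  have hirrefl := fun x : α => irrefl (r := lt) x
  -- Each case with `forkLevel a > forkLevel b` contradicts transitivity, irreflexivity,
  -- `IncompRel lt p r` or, when `a = q`, `hmax`.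
  unfold forkLevel
  split_ifs <;> subst_vars <;> grind

theorem forkLevel_q : forkLevel lt q p r q = 1 := by
  simp [forkLevel]

theorem IsFork.forkLevel_p [Std.Irrefl lt] (h : IsFork lt q p r) : forkLevel lt q p r p = 2 := by
  simp [forkLevel, (ne_of_irrefl h.1).symm]

theorem IsFork.forkLevel_r [Std.Irrefl lt] (h : IsFork lt q p r) : forkLevel lt q p r r = 3 := by
  simp [forkLevel, (ne_of_irrefl h.2.1).symm, h.2.2.2.symm]

theorem mem_of_one_le_forkLevel_le_three {w : α} (h₁ : 1 ≤ forkLevel lt q p r w)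
    (h₃ : forkLevel lt q p r w ≤ 3) : w = q ∨ w = p ∨ w = r := by
  unfold forkLevel at h₁ h₃
  split_ifs at h₁ h₃ <;> simp_all

end ForkLevel

section LinExt

variable {n : ℕ} {lt : Fin n → Fin n → Prop}

def AppearConsecutively (lt : Fin n → Fin n → Prop) (x y z : Fin n) : Prop :=
  ∃ π : Equiv.Perm (Fin n), IsLinExt lt π ∧ ∃ (i : ℕ) (h : i + 2 < n),
    π ⟨i, by omega⟩ = x ∧ π ⟨i + 1, by omega⟩ = y ∧ π ⟨i + 2, h⟩ = z

theorem AppearConsecutively.of_swap {x y z : Fin n} (h : AppearConsecutively (swap lt) x y z) :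
    AppearConsecutively lt z y x := by
  obtain ⟨π, hπ, i, hi, rfl, rfl, rfl⟩ := h
  refine ⟨Fin.revPerm.trans π, fun a b hab => Fin.rev_lt_rev.1 (hπ _ _ hab), n - 3 - i,
    by omega, ?_, ?_, ?_⟩ <;> simp only [Equiv.trans_apply, Fin.revPerm_apply] <;>
    congr 1 <;> ext <;> simp <;> omega

theorem isLinExt_sort {γ : Type*} [LinearOrder γ] {κ : Fin n → γ}
    (hκ : ∀ a b, lt a b → κ a < κ b) : IsLinExt lt (Tuple.sort κ) :=
  fun _ _ h => (Tuple.monotone_sort κ).reflect_lt (hκ _ _ h)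

theorem val_symm_eq_succ_of_monotone {γ : Type*} [Preorder γ] {β : Fin n → γ}
    {π : Equiv.Perm (Fin n)} (hβπ : Monotone (β ∘ π)) {x y : Fin n} (hxy : β x < β y)
    (hbetween : ∀ w, β x ≤ β w → β w ≤ β y → w = x ∨ w = y) :
    (π.symm y : ℕ) = π.symm x + 1 := by
  have hlt : π.symm x < π.symm y := hβπ.reflect_lt (by simpa)
  by_contra hne
  obtain ⟨k, hk⟩ : ∃ k : Fin n, (k : ℕ) = π.symm x + 1 := ⟨⟨_, by omega⟩, rfl⟩
  have h₁ : β x ≤ β (π k) := by simpa using hβπ (Fin.le_def.2 (by omega) : π.symm x ≤ k)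
  have h₂ : β (π k) ≤ β y := by simpa using hβπ (Fin.le_def.2 (by omega) : k ≤ π.symm y)
  rcases hbetween (π k) h₁ h₂ with h | h <;>
    have := congrArg Fin.val (π.eq_symm_apply.2 h) <;> omega

theorem appearConsecutively_of_level [IsStrictOrder (Fin n) lt] {β : Fin n → ℕ}
    (hβ : ∀ a b, lt a b → β a ≤ β b) {x y z : Fin n} (hxy : β x < β y)
    (hyz : β y < β z)
    (hfib : ∀ w, β x ≤ β w → β w ≤ β z → w = x ∨ w = y ∨ w = z) :
    AppearConsecutively lt x y z := by
  set κ : Fin n → ℕ ×ₗ ℕ := fun w => toLex (β w, numBelow lt w)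
  have hlin : IsLinExt lt (Tuple.sort κ) := isLinExt_sort fun a b h =>
    Prod.Lex.toLex_lt_toLex'.2 ⟨hβ a b h, fun _ => numBelow_lt_numBelow h⟩
  set π := Tuple.sort κ
  have hβπ : Monotone (β ∘ π) := Prod.Lex.monotone_fst_ofLex.comp (Tuple.monotone_sort κ)
  have hxy' := val_symm_eq_succ_of_monotone hβπ hxy fun w h₁ h₂ =>
    (hfib w h₁ (h₂.trans hyz.le)).imp_right
      (·.resolve_right (by rintro rfl; exact h₂.not_gt hyz))
  have hyz' := val_symm_eq_succ_of_monotone hβπ hyz fun w h₁ h₂ =>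
    (hfib w (hxy.le.trans h₁) h₂).resolve_left (by rintro rfl; exact h₁.not_gt hxy)
  refine ⟨π, hlin, π.symm x, by omega, ?_, ?_, ?_⟩
  · simp
  · simp [← hxy']
  · simp [show (π.symm x : ℕ) + 2 = π.symm z by omega]

theorem IsFork.exists_appearConsecutively [IsStrictOrder (Fin n) lt] {q p r : Fin n}
    (h : IsFork lt q p r) : ∃ q p r, IsFork lt q p r ∧ AppearConsecutively lt q p r := by
  obtain ⟨q, p, r, h, hmax⟩ := h.exists_forall_not_lt
  refine ⟨q, p, r, h, appearConsecutively_of_level (β := forkLevel lt q p r)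
    (fun a b => forkLevel_le_of_lt h hmax) (by simp [forkLevel_q, h.forkLevel_p])
    (by simp [h.forkLevel_p, h.forkLevel_r])
    fun w h₁ h₃ => mem_of_one_le_forkLevel_le_three (lt := lt) ?_ ?_⟩
  · simpa [forkLevel_q] using h₁
  · simpa [h.forkLevel_r] using h₃

theorem not_braid_of_appearConsecutively {x y z : Fin n} (h : AppearConsecutively lt x y z)
    (hxz : ¬ IncompRel lt x z) (hxyz : ¬ (IncompRel lt x y ↔ IncompRel lt y z)) :
    ¬ ∀ π : Equiv.Perm (Fin n), IsLinExt lt π → ∀ i : ℕ, i + 2 < n →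
        tauOp lt i (tauOp lt (i + 1) (tauOp lt i π)) =
          tauOp lt (i + 1) (tauOp lt i (tauOp lt (i + 1) π)) := by
  obtain ⟨π, hπ, i, hi, rfl, rfl, rfl⟩ := h
  intro H
  exact ((tauOp_braid_iff lt π hi).1 (H π hπ i hi)).elim hxz hxyz

end LinExt

theorem incompRel_or_iff_of_forall_symmGen {α : Type*} {lt : α → α → Prop}
    (hT : ∀ a b c, SymmGen lt a b → SymmGen lt b c → a ≠ c → SymmGen lt a c) {x y z : α}
    (hxy : x ≠ y) (hyz : y ≠ z) :
    IncompRel lt x z ∨ (IncompRel lt x y ↔ IncompRel lt y z) := by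
  simp only [← not_symmGen_iff, not_iff_not, or_iff_not_imp_left, not_not]
  exact fun hxz => ⟨fun h => hT y x z h.symm hxz hyz, fun h => hT x z y hxz h.symm hxy⟩

theorem forall_reflTransGen_symmGen_lt_iff {α : Type*} [PartialOrder α] :
    (∀ x y : α, ReflTransGen (SymmGen (· < ·)) x y → SymmGen (· ≤ ·) x y) ↔
      ∀ a b c : α,
        SymmGen (· < ·) a b → SymmGen (· < ·) b c → a ≠ c → SymmGen (· < ·) a c := by
  have lt_of_le {a b : α} (h : SymmGen (· ≤ ·) a b) (hne : a ≠ b) : SymmGen (· < ·) a b :=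
    h.imp (lt_of_le_of_ne · hne) (lt_of_le_of_ne · hne.symm)
  have le_of_lt {a b : α} (h : SymmGen (· < ·) a b) : SymmGen (· ≤ ·) a b :=
    h.imp le_of_lt le_of_lt
  refine ⟨fun H a b c hab hbc hne => lt_of_le (H a c (.tail (.single hab) hbc)) hne,
    fun hT x y hxy => ?_⟩
  induction hxy with
  | refl => exact .inl le_rfl
  | @tail b c _ hbc ih =>
    by_cases hxb : x = b
    · exact hxb ▸ le_of_lt hbc
    by_cases hxc : x = c
    · exact hxc ▸ .inl le_rfl
    exact le_of_lt (hT x b c (lt_of_le ih hxb) hbc hxc)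

/-- the braid relations hold for the `τ_i` on `L(P)` iff `P` is a
direct sum of chains (i.e. every connected component is totally ordered). -/
theorem braid_iff_direct_sum_of_chains {n : ℕ} (P : PartialOrder (Fin n)) :
    (∀ π : Equiv.Perm (Fin n), IsLinExt P.lt π → ∀ i : ℕ, i + 2 < n →
        tauOp P.lt i (tauOp P.lt (i + 1) (tauOp P.lt i π)) =
          tauOp P.lt (i + 1) (tauOp P.lt i (tauOp P.lt (i + 1) π)))
    ↔ (∀ x y : Fin n, InSameComp P.lt x y → (P.le x y ∨ P.le y x)) := by
  have : IsStrictOrder (Fin n) P.lt := @instIsStrictOrderLt _ P.toPreorder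
  refine Iff.trans ?_ (@forall_reflTransGen_symmGen_lt_iff (Fin n) P).symm
  constructor
  · refine fun H a b c hab hbc hne => by_contra fun hac => ?_
    rcases isFork_or_isFork_swap_of_incompRel hab hbc (not_symmGen_iff.1 hac) hne with hV | hΛ
    · obtain ⟨q, p, r, ⟨hqp, hqr, hpr, -⟩, happ⟩ := hV.exists_appearConsecutively
      exact not_braid_of_appearConsecutively happ (·.1 hqr) (fun hiff => (hiff.2 hpr).1 hqp) H
    · obtain ⟨q, p, r, ⟨hqp, hqr, hpr, -⟩, happ⟩ := hΛ.exists_appearConsecutively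
      exact not_braid_of_appearConsecutively happ.of_swap (·.1 hqr)
        (fun hiff => (hiff.1 ((incompRel_swap_apply _).1 hpr).symm).1 hqp) H
  · intro hT π _ i hi
    exact (tauOp_braid_iff _ π hi).2 (incompRel_or_iff_of_forall_symmGen hT
      (π.injective.ne (by simp [Fin.ext_iff])) (π.injective.ne (by simp [Fin.ext_iff])))
end
end
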